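/- Let Λ be a row-finite locally convex k-graph, R a unital commutative ring, and H ⊆ Λ⁰ a saturated hereditary subset. Then Λ∖H = (Λ⁰∖H, s⁻¹(Λ⁰∖H), r, s) is a row-finite locally convex k-graph, and KP_R(Λ∖H) is isomorphic as an R-algebra to the quotient KP_R(Λ)/I_H. -/

import Mathlib

open scoped ENat

/-! ## `k`-graphs -/

/-- The `i`-th standard generator of `ℕᵏ`. -/
def unitVec {k : ℕ} (i : Fin k) : Fin k → ℕ := fun j => if j = i then 1 else 0

/-- A higher-rank graph (`k`-graph): a countable category together with a degree
functor `d : Λ → ℕᵏ` satisfying the unique factorization property.  Morphisms are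
composed in the "path" order: `comp f g` is defined when `src f = rng g`. -/
structure KGraph (k : ℕ) : Type 1 where
  Obj : Type
  Mor : Type
  mor_countable : Countable Mor
  src : Mor → Obj
  rng : Mor → Obj
  comp : ∀ f g : Mor, src f = rng g → Mor
  id : Obj → Mor
  deg : Mor → Fin k → ℕ
  src_id : ∀ v, src (id v) = v
  rng_id : ∀ v, rng (id v) = v
  deg_id : ∀ v, deg (id v) = 0
  src_comp : ∀ f g h, src (comp f g h) = src g
  rng_comp : ∀ f g h, rng (comp f g h) = rng f
  deg_comp : ∀ f g h, deg (comp f g h) = deg f + deg g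
  id_comp : ∀ f, comp (id (rng f)) f (src_id (rng f)) = f
  comp_id : ∀ f, comp f (id (src f)) ((rng_id (src f)).symm) = f
  comp_assoc : ∀ f g h (hfg : src f = rng g) (hgh : src g = rng h),
    comp (comp f g hfg) h ((src_comp f g hfg).trans hgh) =
      comp f (comp g h hgh) (hfg.trans (rng_comp g h hgh).symm)
  factorization : ∀ (f : Mor) (m n : Fin k → ℕ), deg f = m + n →
    ∃! p : Mor × Mor, ∃ h : src p.1 = rng p.2,
      deg p.1 = m ∧ deg p.2 = n ∧ comp p.1 p.2 h = f

namespace KGraph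

variable {k : ℕ}

/-- `Λ` is row-finite if every `vΛⁿ` is finite. -/
def RowFinite (Λ : KGraph k) : Prop :=
  ∀ (v : Λ.Obj) (n : Fin k → ℕ), {f : Λ.Mor | Λ.rng f = v ∧ Λ.deg f = n}.Finite

/-- `Λ` has no sources if every `vΛⁿ` is nonempty. -/
def NoSources (Λ : KGraph k) : Prop :=
  ∀ (v : Λ.Obj) (n : Fin k → ℕ), ∃ f : Λ.Mor, Λ.rng f = v ∧ Λ.deg f = n

/-- `Λ` is locally convex. -/
def LocallyConvex (Λ : KGraph k) : Prop :=
  ∀ (v : Λ.Obj) (i j : Fin k), i ≠ j →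
    ∀ f g : Λ.Mor, Λ.rng f = v → Λ.deg f = unitVec i → Λ.rng g = v → Λ.deg g = unitVec j →
      (∃ f' : Λ.Mor, Λ.rng f' = Λ.src f ∧ Λ.deg f' = unitVec j) ∧
      (∃ g' : Λ.Mor, Λ.rng g' = Λ.src g ∧ Λ.deg g' = unitVec i)

/-- The set `Λ^{≤ n}`. -/
def LeSet (Λ : KGraph k) (n : Fin k → ℕ) : Set Λ.Mor :=
  {f | Λ.deg f ≤ n ∧ ∀ i : Fin k, Λ.deg f + unitVec i ≤ n →
    ¬∃ g : Λ.Mor, Λ.rng g = Λ.src f ∧ Λ.deg g = unitVec i}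

/-- Condition (MT3): any two vertices can be connected to a common vertex. -/
def MT3 (Λ : KGraph k) : Prop :=
  ∀ v₁ v₂ : Λ.Obj, ∃ w : Λ.Obj,
    (∃ f : Λ.Mor, Λ.rng f = v₁ ∧ Λ.src f = w) ∧ (∃ f : Λ.Mor, Λ.rng f = v₂ ∧ Λ.src f = w)

/-- A hereditary set of vertices. -/
def Hereditary (Λ : KGraph k) (H : Set Λ.Obj) : Prop :=
  ∀ v w : Λ.Obj, v ∈ H → (∃ f : Λ.Mor, Λ.rng f = v ∧ Λ.src f = w) → w ∈ H

/-- A saturated set of vertices. -/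
def Saturated (Λ : KGraph k) (H : Set Λ.Obj) : Prop :=
  ∀ (v : Λ.Obj) (i : Fin k),
    (∀ f ∈ Λ.LeSet (unitVec i), Λ.rng f = v → Λ.src f ∈ H) → v ∈ H

/-- A maximal tail: a nonempty vertex set satisfying (MT1), (MT2) and (MT3). -/
def MaximalTail (Λ : KGraph k) (M : Set Λ.Obj) : Prop :=
  M.Nonempty ∧
  (∀ v w : Λ.Obj, w ∈ M → (∃ f : Λ.Mor, Λ.rng f = v ∧ Λ.src f = w) → v ∈ M) ∧
  (∀ v ∈ M, ∀ i : Fin k, ∃ f ∈ Λ.LeSet (unitVec i), Λ.rng f = v ∧ Λ.src f ∈ M) ∧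
  (∀ v₁ ∈ M, ∀ v₂ ∈ M, ∃ w ∈ M,
    (∃ f : Λ.Mor, Λ.rng f = v₁ ∧ Λ.src f = w) ∧ (∃ f : Λ.Mor, Λ.rng f = v₂ ∧ Λ.src f = w))

/-- The quotient graph `Λ ∖ H` for a hereditary `H`: vertices `Λ⁰ ∖ H` and
morphisms those of `Λ` with source outside `H`. -/
def minus (Λ : KGraph k) (H : Set Λ.Obj) (hH : Λ.Hereditary H) : KGraph k where
  Obj := {v : Λ.Obj // v ∉ H}
  Mor := {f : Λ.Mor // Λ.src f ∉ H}
  mor_countable := by haveI := Λ.mor_countable; exact inferInstance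
  src f := ⟨Λ.src f.1, f.2⟩
  rng f := ⟨Λ.rng f.1, fun hm => f.2 (hH _ _ hm ⟨f.1, rfl, rfl⟩)⟩
  comp f g h := ⟨Λ.comp f.1 g.1 (congrArg Subtype.val h), by
    rw [Λ.src_comp]; exact g.2⟩
  id v := ⟨Λ.id v.1, by rw [Λ.src_id]; exact v.2⟩
  deg f := Λ.deg f.1
  src_id v := Subtype.ext (Λ.src_id v.1)
  rng_id v := Subtype.ext (Λ.rng_id v.1)
  deg_id v := Λ.deg_id v.1
  src_comp f g h := Subtype.ext (Λ.src_comp f.1 g.1 _)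
  rng_comp f g h := Subtype.ext (Λ.rng_comp f.1 g.1 _)
  deg_comp f g h := Λ.deg_comp f.1 g.1 _
  id_comp f := Subtype.ext (Λ.id_comp f.1)
  comp_id f := Subtype.ext (Λ.comp_id f.1)
  comp_assoc f g h hfg hgh := Subtype.ext (Λ.comp_assoc f.1 g.1 h.1 _ _)
  factorization := by
    rintro ⟨f, hf⟩ m n hdeg
    obtain ⟨⟨p₁, p₂⟩, ⟨h, hm, hn, hcomp⟩, huniq⟩ := Λ.factorization f m n hdeg
    have hp₂ : Λ.src p₂ ∉ H := by
      have hs : Λ.src (Λ.comp p₁ p₂ h) = Λ.src p₂ := Λ.src_comp _ _ _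
      rw [hcomp] at hs
      rw [← hs]; exact hf
    have hp₁ : Λ.src p₁ ∉ H := fun hmem => hp₂ (hH _ _ (h ▸ hmem) ⟨p₂, rfl, rfl⟩)
    refine ⟨(⟨p₁, hp₁⟩, ⟨p₂, hp₂⟩), ⟨Subtype.ext h, hm, hn, Subtype.ext hcomp⟩, ?_⟩
    rintro ⟨⟨q₁, hq₁⟩, ⟨q₂, hq₂⟩⟩ ⟨h', hm', hn', hcomp'⟩
    have hq := huniq (q₁, q₂)
      ⟨congrArg Subtype.val h', hm', hn', congrArg Subtype.val hcomp'⟩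
    rw [Prod.ext_iff]
    exact ⟨Subtype.ext (congrArg Prod.fst hq), Subtype.ext (congrArg Prod.snd hq)⟩

/-! ## Boundary paths -/

/-- `minDeg m d = m ∧ d`, the pointwise minimum of `m ∈ ℕᵏ` and a degree `d ∈ (ℕ∪{∞})ᵏ`,
viewed in `ℕᵏ`. -/
noncomputable def minDeg {k : ℕ} (m : Fin k → ℕ) (d : Fin k → ℕ∞) : Fin k → ℕ :=
  fun i => (min (m i : ℕ∞) (d i)).toNat

lemma minDeg_ne_top {k : ℕ} (m : Fin k → ℕ) (d : Fin k → ℕ∞) (i : Fin k) :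
    min (m i : ℕ∞) (d i) ≠ ⊤ := by
  intro h
  exact ENat.coe_ne_top (m i) (top_le_iff.mp (h ▸ min_le_left (m i : ℕ∞) (d i)))

lemma minDeg_le_deg {k : ℕ} (m : Fin k → ℕ) (d : Fin k → ℕ∞) (i : Fin k) :
    ((minDeg m d i : ℕ∞)) ≤ d i := by
  have h := ENat.coe_toNat (minDeg_ne_top m d i)
  calc ((minDeg m d i : ℕ∞)) = min (m i : ℕ∞) (d i) := h
    _ ≤ d i := min_le_right _ _

lemma minDeg_mono {k : ℕ} {m n : Fin k → ℕ} (h : m ≤ n) (d : Fin k → ℕ∞) :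
    minDeg m d ≤ minDeg n d := by
  intro i
  exact ENat.toNat_le_toNat (min_le_min (by exact_mod_cast h i) le_rfl) (minDeg_ne_top n d i)

/-- A boundary path in `Λ`: a degree-preserving functor `x : Ω_{k,m} → Λ`
(for `m = bdeg ∈ (ℕ ∪ {∞})ᵏ`) such that `p ≤ m` and `p i = m i` imply
`x(p)Λ^{eᵢ} = ∅`. -/
structure BPath {k : ℕ} (Λ : KGraph k) : Type where
  bdeg : Fin k → ℕ∞
  mor : ∀ p q : Fin k → ℕ, p ≤ q → (∀ i, ((q i : ℕ∞)) ≤ bdeg i) → Λ.Mor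
  deg_mor : ∀ p q hpq hq, Λ.deg (mor p q hpq hq) = q - p
  mor_self : ∀ p hp, mor p p le_rfl hp = Λ.id (Λ.rng (mor p p le_rfl hp))
  src_mor : ∀ p q hpq hq, Λ.src (mor p q hpq hq) = Λ.rng (mor q q le_rfl hq)
  rng_mor : ∀ p q hpq (hq : ∀ i, ((q i : ℕ∞)) ≤ bdeg i) (hp : ∀ i, ((p i : ℕ∞)) ≤ bdeg i),
    Λ.rng (mor p q hpq hq) = Λ.rng (mor p p le_rfl hp)
  comp_mor : ∀ p q r (hpq : p ≤ q) (hqr : q ≤ r) (hr : ∀ i, ((r i : ℕ∞)) ≤ bdeg i)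
      (hq : ∀ i, ((q i : ℕ∞)) ≤ bdeg i),
    Λ.comp (mor p q hpq hq) (mor q r hqr hr)
        ((src_mor p q hpq hq).trans (rng_mor q r hqr hr hq).symm) =
      mor p r (hpq.trans hqr) hr
  boundary : ∀ (p : Fin k → ℕ) (hp : ∀ i, ((p i : ℕ∞)) ≤ bdeg i) (i : Fin k),
    ((p i : ℕ∞)) = bdeg i →
      ¬∃ g : Λ.Mor, Λ.rng g = Λ.rng (mor p p le_rfl hp) ∧ Λ.deg g = unitVec i

namespace BPath

variable {Λ : KGraph k}

/-- The vertex `x(m ∧ d(x))` of a boundary path `x`. -/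
noncomputable def vtx (x : BPath Λ) (m : Fin k → ℕ) : Λ.Obj :=
  Λ.rng (x.mor (minDeg m x.bdeg) (minDeg m x.bdeg) le_rfl (fun i => minDeg_le_deg m x.bdeg i))

/-- The range `x(0)` of a boundary path. -/
noncomputable def range (x : BPath Λ) : Λ.Obj := x.vtx 0

/-- The segment `x(m ∧ d(x), n ∧ d(x))` of a boundary path. -/
noncomputable def seg (x : BPath Λ) (m n : Fin k → ℕ) (h : m ≤ n) : Λ.Mor :=
  x.mor (minDeg m x.bdeg) (minDeg n x.bdeg) (minDeg_mono h x.bdeg)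
    (fun i => minDeg_le_deg n x.bdeg i)

/-- `σᵃ(x) = σᵇ(x)`: the two shifted boundary paths coincide. -/
def shiftsEq (x : BPath Λ) (a b : Fin k → ℕ) : Prop :=
  (∀ i, x.bdeg i - (a i : ℕ∞) = x.bdeg i - (b i : ℕ∞)) ∧
  ∀ (p q : Fin k → ℕ) (hpq : p ≤ q)
    (hqa : ∀ i, (((q + a) i : ℕ∞)) ≤ x.bdeg i) (hqb : ∀ i, (((q + b) i : ℕ∞)) ≤ x.bdeg i),
    x.mor (p + a) (q + a) (add_le_add_left hpq a) hqa =
      x.mor (p + b) (q + b) (add_le_add_left hpq b) hqb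

end BPath

/-- `Λ` is aperiodic. -/
def Aperiodic (Λ : KGraph k) : Prop :=
  ∀ (v : Λ.Obj) (m n : Fin k → ℕ), m ≠ n →
    ∃ x : BPath Λ, x.range = v ∧
      ((fun i => m i - minDeg m x.bdeg i) ≠ (fun i => n i - minDeg n x.bdeg i) ∨
        ¬ x.shiftsEq (minDeg m x.bdeg) (minDeg n x.bdeg))

/-- `Λ` is strongly aperiodic: every quotient graph is aperiodic. -/
def StronglyAperiodic (Λ : KGraph k) : Prop :=
  ∀ (H : Set Λ.Obj) (hH : Λ.Hereditary H), Λ.Saturated H → Aperiodic (Λ.minus H hH)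

end KGraph

open scoped Classical

namespace KGraph

/-! ## Kumjian–Pask families and algebras -/

/-- A Kumjian–Pask `Λ`-family `(P, S, S')` in a (possibly nonunital) `R`-algebra `A`.
Here `S` is extended to vertices by `S (id v) = P v` (and similarly for the ghost
elements `S'`), which encodes the usual convention `s_v := p_v`. -/
structure KPFamily {k : ℕ} (Λ : KGraph k) (R : Type) [CommRing R] (A : Type)
    [NonUnitalRing A] [Module R A] [SMulCommClass R A A] [IsScalarTower R A A] where
  P : Λ.Obj → A
  S : Λ.Mor → A
  S' : Λ.Mor → A
  S_id : ∀ v, S (Λ.id v) = P v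
  S'_id : ∀ v, S' (Λ.id v) = P v
  P_mul_self : ∀ v, P v * P v = P v
  P_orthogonal : ∀ v w, v ≠ w → P v * P w = 0
  S_comp : ∀ f g (h : Λ.src f = Λ.rng g), S f * S g = S (Λ.comp f g h)
  S'_comp : ∀ f g (h : Λ.src f = Λ.rng g), S' g * S' f = S' (Λ.comp f g h)
  P_S : ∀ f, P (Λ.rng f) * S f = S f
  S_P : ∀ f, S f * P (Λ.src f) = S f
  P_S' : ∀ f, P (Λ.src f) * S' f = S' f
  S'_P : ∀ f, S' f * P (Λ.rng f) = S' f
  KP3 : ∀ (n : Fin k → ℕ), n ≠ 0 → ∀ f ∈ Λ.LeSet n, ∀ g ∈ Λ.LeSet n,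
    S' f * S g = if f = g then P (Λ.src f) else 0
  KP4 : ∀ (v : Λ.Obj) (n : Fin k → ℕ), n ≠ 0 →
    P v = ∑ᶠ f ∈ {g : Λ.Mor | g ∈ Λ.LeSet n ∧ Λ.rng g = v}, S f * S' f

/-- `A` (a possibly nonunital `R`-algebra) is *the* Kumjian–Pask algebra of `Λ`:
it carries a Kumjian–Pask family which spans it and is universal among
Kumjian–Pask families. -/
structure IsKPAlgebra {k : ℕ} (Λ : KGraph k) (R : Type) [CommRing R] (A : Type)
    [NonUnitalRing A] [Module R A] [SMulCommClass R A A] [IsScalarTower R A A] :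
    Type 1 where
  fam : KPFamily Λ R A
  spanning : ∀ a : A, a ∈ Submodule.span R
    {x : A | ∃ f g : Λ.Mor, Λ.src f = Λ.src g ∧ x = fam.S f * fam.S' g}
  universal : ∀ (B : Type) [NonUnitalRing B] [Module R B] [SMulCommClass R B B]
      [IsScalarTower R B B] (F : KPFamily Λ R B),
      ∃ φ : A →ₙₐ[R] B, (∀ v, φ (fam.P v) = F.P v) ∧
        (∀ f, φ (fam.S f) = F.S f) ∧ (∀ f, φ (fam.S' f) = F.S' f)

variable {k : ℕ} {Λ : KGraph k} {R : Type} [CommRing R] {A : Type}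
  [NonUnitalRing A] [Module R A] [SMulCommClass R A A] [IsScalarTower R A A]

/-- The degree-`n` homogeneous component of the `ℤᵏ`-grading of a Kumjian–Pask algebra. -/
def KPFamily.component (F : KPFamily Λ R A) (n : Fin k → ℤ) : Submodule R A :=
  Submodule.span R {x : A | ∃ f g : Λ.Mor, Λ.src f = Λ.src g ∧
    (fun i => (Λ.deg f i : ℤ) - (Λ.deg g i : ℤ)) = n ∧ x = F.S f * F.S' g}

/-- A two-sided ideal is graded if it is spanned by its intersections with the
homogeneous components. -/
def KPFamily.IsGradedIdeal (F : KPFamily Λ R A) (I : TwoSidedIdeal A) : Prop :=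
  (I : Set A) ⊆
    ↑(Submodule.span R (⋃ n : Fin k → ℤ, ((I : Set A) ∩ (F.component n : Set A))))

/-- A two-sided ideal is basic if `r • p_v ∈ I` for `r ≠ 0` implies `p_v ∈ I`. -/
def KPFamily.IsBasicIdeal (F : KPFamily Λ R A) (I : TwoSidedIdeal A) : Prop :=
  ∀ (r : R) (v : Λ.Obj), r ≠ 0 → r • F.P v ∈ I → F.P v ∈ I

/-- The span `I_H = span_R {s_f s_g* : s(f) = s(g) ∈ H}` (a two-sided ideal when `H`
is saturated and hereditary). -/
def KPFamily.IH (F : KPFamily Λ R A) (H : Set Λ.Obj) : Submodule R A :=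
  Submodule.span R {x : A | ∃ f g : Λ.Mor, Λ.src f = Λ.src g ∧ Λ.src f ∈ H ∧
    x = F.S f * F.S' g}

end KGraph

/-! ## Prime and primitive rings and ideals -/

/-- A two-sided ideal `P` is prime: it is proper, and `I₁I₂ ⊆ P` implies `I₁ ⊆ P` or
`I₂ ⊆ P` for two-sided ideals `I₁, I₂`. -/
def IsPrimeTwoSidedIdeal {A : Type} [NonUnitalRing A] (P : TwoSidedIdeal A) : Prop :=
  (P : Set A) ≠ Set.univ ∧
  ∀ I J : TwoSidedIdeal A, (∀ x ∈ I, ∀ y ∈ J, x * y ∈ P) →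
    (I : Set A) ⊆ (P : Set A) ∨ (J : Set A) ⊆ (P : Set A)

/-- A (possibly nonunital) ring is prime if its zero ideal is prime. -/
def IsPrimeRing (A : Type) [NonUnitalRing A] : Prop :=
  IsPrimeTwoSidedIdeal (⊥ : TwoSidedIdeal A)

/-- A two-sided ideal `I` of a (possibly nonunital) ring is left primitive: there is a
simple left module (for the quotient ring, encoded as an `A`-module structure on an
additive group `M`) whose annihilator is exactly `I`.  For `I = ⊥` this says that `A`
has a faithful simple left module. -/
def IsPrimitiveTwoSidedIdeal {A : Type} [NonUnitalRing A] (I : TwoSidedIdeal A) : Prop :=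
  ∃ (M : Type) (_ : AddCommGroup M) (sm : A → M → M),
    (∀ a b m, sm (a + b) m = sm a m + sm b m) ∧
    (∀ a m n, sm a (m + n) = sm a m + sm a n) ∧
    (∀ a b m, sm (a * b) m = sm a (sm b m)) ∧
    (∃ a m, sm a m ≠ 0) ∧
    (∀ N : AddSubgroup M, (∀ a : A, ∀ m ∈ N, sm a m ∈ N) → N = ⊥ ∨ N = ⊤) ∧
    {a : A | ∀ m, sm a m = 0} = (I : Set A)

/-- A (possibly nonunital) ring is left primitive if it has a faithful simple left
module. -/
def IsLeftPrimitiveRing (A : Type) [NonUnitalRing A] : Prop :=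
  IsPrimitiveTwoSidedIdeal (⊥ : TwoSidedIdeal A)

namespace KGraph

/-! ## The desourcification -/

variable {k : ℕ}

/-- The key invariant of a pair `(x; m)` in `V_Λ`: the vertex `x(m ∧ d(x))` and
`m - m ∧ d(x)`.  Two pairs are `≈`-equivalent iff their keys agree. -/
noncomputable def vkey (Λ : KGraph k) : BPath Λ × (Fin k → ℕ) → Λ.Obj × (Fin k → ℕ) :=
  fun t => (t.1.vtx t.2, fun i => t.2 i - minDeg t.2 t.1.bdeg i)

/-- The vertex set `V_Λ / ≈` of the desourcification. -/
def VQ (Λ : KGraph k) : Type := Quotient (Setoid.ker (vkey Λ))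

/-- The class `[x; m]`. -/
noncomputable def vmk (Λ : KGraph k) (x : BPath Λ) (m : Fin k → ℕ) : VQ Λ :=
  Quotient.mk (Setoid.ker (vkey Λ)) (x, m)

/-- The set `P_Λ` of triples `(x; (m, n))` with `m ≤ n`. -/
def PPre (Λ : KGraph k) : Type := {t : BPath Λ × ((Fin k → ℕ) × (Fin k → ℕ)) // t.2.1 ≤ t.2.2}

/-- The key invariant of `(x; (m, n))`: the segment `x(m ∧ d(x), n ∧ d(x))`,
`m - m ∧ d(x)` and `n - m`.  Two triples are `∼`-equivalent iff their keys agree. -/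
noncomputable def pkey (Λ : KGraph k) : PPre Λ → Λ.Mor × ((Fin k → ℕ) × (Fin k → ℕ)) :=
  fun t => (t.1.1.seg t.1.2.1 t.1.2.2 t.2,
    (fun i => t.1.2.1 i - minDeg t.1.2.1 t.1.1.bdeg i, fun i => t.1.2.2 i - t.1.2.1 i))

/-- The morphism set `P_Λ / ∼` of the desourcification. -/
def PQ (Λ : KGraph k) : Type := Quotient (Setoid.ker (pkey Λ))

/-- The class `[x; (m, n)]`. -/
noncomputable def pmk (Λ : KGraph k) (x : BPath Λ) (m n : Fin k → ℕ) (h : m ≤ n) : PQ Λ :=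
  Quotient.mk (Setoid.ker (pkey Λ)) ⟨(x, (m, n)), h⟩

/-- `w` is the boundary path `x(0, a) σᵇ(y)` obtained by gluing the initial segment
`x(0,a)` of `x` with the shift `σᵇ(y)` of `y`. -/
def IsGluing {Λ : KGraph k} (x : BPath Λ) (a : Fin k → ℕ) (y : BPath Λ) (b : Fin k → ℕ)
    (w : BPath Λ) : Prop :=
  (∀ i, w.bdeg i = (a i : ℕ∞) + (y.bdeg i - (b i : ℕ∞))) ∧
  (∀ (h1 : (0 : Fin k → ℕ) ≤ a) (h2 : ∀ i, ((a i : ℕ∞)) ≤ w.bdeg i)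
      (h3 : ∀ i, ((a i : ℕ∞)) ≤ x.bdeg i),
    w.mor 0 a h1 h2 = x.mor 0 a h1 h3) ∧
  (∀ (p q : Fin k → ℕ) (hpq : p ≤ q) (h2 : ∀ i, (((a + q) i : ℕ∞)) ≤ w.bdeg i)
      (h4 : ∀ i, (((b + q) i : ℕ∞)) ≤ y.bdeg i),
    w.mor (a + p) (a + q) (add_le_add_right hpq a) h2 =
      y.mor (b + p) (b + q) (add_le_add_right hpq b) h4)

/-- `Λt` is (a realization of) the desourcification `Λ̃` of `Λ`: its vertices and
morphisms are identified with `V_Λ/≈` and `P_Λ/∼`, with range, source, degree,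
identities and composition given by the defining formulas of Farthing's construction. -/
structure Desourcification (Λ Λt : KGraph k) : Type where
  eObj : VQ Λ ≃ Λt.Obj
  eMor : PQ Λ ≃ Λt.Mor
  rng_eq : ∀ (x : BPath Λ) (m n : Fin k → ℕ) (h : m ≤ n),
    Λt.rng (eMor (pmk Λ x m n h)) = eObj (vmk Λ x m)
  src_eq : ∀ (x : BPath Λ) (m n : Fin k → ℕ) (h : m ≤ n),
    Λt.src (eMor (pmk Λ x m n h)) = eObj (vmk Λ x n)
  deg_eq : ∀ (x : BPath Λ) (m n : Fin k → ℕ) (h : m ≤ n),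
    Λt.deg (eMor (pmk Λ x m n h)) = n - m
  id_eq : ∀ (x : BPath Λ) (m : Fin k → ℕ),
    Λt.id (eObj (vmk Λ x m)) = eMor (pmk Λ x m m le_rfl)
  comp_eq : ∀ (x : BPath Λ) (m n : Fin k → ℕ) (hmn : m ≤ n)
      (y : BPath Λ) (p q : Fin k → ℕ) (hpq : p ≤ q)
      (h : Λt.src (eMor (pmk Λ x m n hmn)) = Λt.rng (eMor (pmk Λ y p q hpq)))
      (w : BPath Λ), IsGluing x (minDeg n x.bdeg) y (minDeg p y.bdeg) w →
    Λt.comp (eMor (pmk Λ x m n hmn)) (eMor (pmk Λ y p q hpq)) h =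
      eMor (pmk Λ w m (n + (q - p)) (hmn.trans le_self_add))

/-- `w = l x` is the boundary path extending the boundary path `x` by the
morphism `l` (with `x(0) = s(l)`). -/
def IsExtension {Λ : KGraph k} (l : Λ.Mor) (x : BPath Λ) (w : BPath Λ) : Prop :=
  (∀ i, w.bdeg i = (Λ.deg l i : ℕ∞) + x.bdeg i) ∧
  (∀ (h1 : (0 : Fin k → ℕ) ≤ Λ.deg l) (h2 : ∀ i, ((Λ.deg l i : ℕ∞)) ≤ w.bdeg i),
    w.mor 0 (Λ.deg l) h1 h2 = l) ∧
  (∀ (p q : Fin k → ℕ) (hpq : p ≤ q)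
      (h2 : ∀ i, (((Λ.deg l + q) i : ℕ∞)) ≤ w.bdeg i)
      (h4 : ∀ i, ((q i : ℕ∞)) ≤ x.bdeg i),
    w.mor (Λ.deg l + p) (Λ.deg l + q) (add_le_add_right hpq (Λ.deg l)) h2 =
      x.mor p q hpq h4)

/-- The graph of the map `ι : Λ → Λ̃`, `ι(l) = [l x; (0, d(l))]` for any
`x ∈ s(l)Λ^{≤∞}`. -/
def IotaRel {Λ Λt : KGraph k} (D : Desourcification Λ Λt) (l : Λ.Mor) (a : Λt.Mor) :
    Prop :=
  ∃ x w : BPath Λ, x.range = Λ.src l ∧ IsExtension l x w ∧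
    a = D.eMor (pmk Λ w 0 (Λ.deg l) (fun i => Nat.zero_le _))

/-- The graph of the map `π : Λ̃ → ι(Λ)`, `π([x; (m, n)]) = [x; (m ∧ d(x), n ∧ d(x))]`. -/
def PiRel {Λ Λt : KGraph k} (D : Desourcification Λ Λt) (a b : Λt.Mor) : Prop :=
  ∃ (x : BPath Λ) (m n : Fin k → ℕ) (hmn : m ≤ n),
    a = D.eMor (pmk Λ x m n hmn) ∧
    b = D.eMor (pmk Λ x (minDeg m x.bdeg) (minDeg n x.bdeg) (minDeg_mono hmn x.bdeg))

/-- The graph of the vertex map of `π : Λ̃ → ι(Λ)`, `π([x; m]) = [x; m ∧ d(x)]`. -/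
def PiVRel {Λ Λt : KGraph k} (D : Desourcification Λ Λt) (u u' : Λt.Obj) : Prop :=
  ∃ (x : BPath Λ) (m : Fin k → ℕ),
    u = D.eObj (vmk Λ x m) ∧ u' = D.eObj (vmk Λ x (minDeg m x.bdeg))

end KGraph

namespace KGraph
variable {k : ℕ} {Λ : KGraph k}

lemma eq_id_of_deg_eq_zero {f : Λ.Mor} (hf : Λ.deg f = 0) : f = Λ.id (Λ.rng f) := by
  obtain ⟨p, _, hu⟩ := Λ.factorization f 0 0 (by simpa using hf)
  have h1 : ((Λ.id (Λ.rng f), f) : Λ.Mor × Λ.Mor) = p :=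
    hu _ ⟨Λ.src_id (Λ.rng f), Λ.deg_id _, hf, Λ.id_comp f⟩
  have h2 : ((f, Λ.id (Λ.src f)) : Λ.Mor × Λ.Mor) = p :=
    hu _ ⟨(Λ.rng_id (Λ.src f)).symm, hf, Λ.deg_id _, Λ.comp_id f⟩
  exact (congrArg Prod.fst (h1.trans h2.symm)).symm

lemma src_eq_rng_of_deg_eq_zero {f : Λ.Mor} (hf : Λ.deg f = 0) : Λ.src f = Λ.rng f := by
  calc Λ.src f = Λ.src (Λ.id (Λ.rng f)) := by rw [← eq_id_of_deg_eq_zero hf]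
    _ = Λ.rng f := Λ.src_id _

lemma le_unitVec_cases {m : Fin k → ℕ} {j : Fin k} (h : m ≤ unitVec j) :
    m = 0 ∨ m = unitVec j := by
  rcases Nat.lt_or_ge (m j) 1 with hj | hj
  · left; funext i
    show m i = 0
    by_cases hij : i = j
    · rw [hij]; exact Nat.lt_one_iff.mp hj
    · have hi := h i
      have h0 : unitVec j i = 0 := by simp [unitVec, hij]
      rw [h0] at hi
      exact Nat.le_zero.mp hi
  · right; funext i
    by_cases hij : i = j
    · have hi := h j
      have h1 : unitVec j j = 1 := by simp [unitVec]
      rw [hij, h1]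
      rw [h1] at hi
      exact le_antisymm hi hj
    · have hi := h i
      have h0 : unitVec j i = 0 := by simp [unitVec, hij]
      rw [h0] at hi ⊢
      exact Nat.le_zero.mp hi

lemma exists_edge_notin {H : Set Λ.Obj} (hsat : Λ.Saturated H) {u : Λ.Obj} (hu : u ∉ H)
    (j : Fin k) (hex : ∃ g : Λ.Mor, Λ.rng g = u ∧ Λ.deg g = unitVec j) :
    ∃ g : Λ.Mor, Λ.rng g = u ∧ Λ.deg g = unitVec j ∧ Λ.src g ∉ H := by
  by_contra hcon
  push_neg at hcon
  apply hu
  apply hsat u j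
  intro f hf hrng
  rcases le_unitVec_cases hf.1 with h0 | hj
  · exfalso
    have hsrc : Λ.src f = Λ.rng f := src_eq_rng_of_deg_eq_zero h0
    exact hf.2 j (by rw [h0]; simpa using le_rfl) (by rw [hsrc, hrng]; exact hex)
  · exact hcon f hrng hj

lemma finite_rng_deg_le (hrf : Λ.RowFinite) (v : Λ.Obj) (n : Fin k → ℕ) :
    {f : Λ.Mor | Λ.rng f = v ∧ Λ.deg f ≤ n}.Finite := by
  have hsub : {f : Λ.Mor | Λ.rng f = v ∧ Λ.deg f ≤ n} ⊆
      ⋃ m ∈ Set.univ.pi (fun i => Set.Iic (n i)),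
        {f : Λ.Mor | Λ.rng f = v ∧ Λ.deg f = m} := by
    intro f hf
    exact Set.mem_biUnion (fun i _ => hf.2 i) ⟨hf.1, rfl⟩
  exact (Set.Finite.biUnion (Set.Finite.pi (fun i => Set.finite_Iic (n i)))
    (fun m _ => hrf v m)).subset hsub

lemma finite_leSet_rng (hrf : Λ.RowFinite) (v : Λ.Obj) (n : Fin k → ℕ) :
    {f : Λ.Mor | f ∈ Λ.LeSet n ∧ Λ.rng f = v}.Finite :=
  (finite_rng_deg_le hrf v n).subset (fun _ hf => ⟨hf.2, hf.1.1⟩)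

lemma comp_mem_leSet {g α : Λ.Mor} {m : Fin k → ℕ} (hα : α ∈ Λ.LeSet m)
    (h : Λ.src g = Λ.rng α) : Λ.comp g α h ∈ Λ.LeSet (Λ.deg g + m) := by
  constructor
  · rw [Λ.deg_comp]
    exact add_le_add_right hα.1 _
  · intro i hi
    rw [Λ.src_comp]
    apply hα.2 i
    intro j
    have hj := hi j
    rw [Λ.deg_comp] at hj
    simp only [Pi.add_apply, add_assoc] at hj
    exact Nat.le_of_add_le_add_left hj

lemma minus_leSet_iff {H : Set Λ.Obj} (hH : Λ.Hereditary H) (hsat : Λ.Saturated H)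
    {f : Λ.Mor} (hf : Λ.src f ∉ H) (n : Fin k → ℕ) :
    (⟨f, hf⟩ : (Λ.minus H hH).Mor) ∈ (Λ.minus H hH).LeSet n ↔ f ∈ Λ.LeSet n := by
  simp only [LeSet, Set.mem_setOf_eq]
  constructor
  · rintro ⟨h1, h2⟩
    refine ⟨h1, fun i hi hex => ?_⟩
    obtain ⟨g, hg1, hg2, hg3⟩ := exists_edge_notin hsat hf i hex
    exact h2 i hi ⟨⟨g, hg3⟩, Subtype.ext hg1, hg2⟩
  · rintro ⟨h1, h2⟩
    refine ⟨h1, fun i hi hex => ?_⟩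
    obtain ⟨G, hG1, hG2⟩ := hex
    exact h2 i hi ⟨G.1, congrArg Subtype.val hG1, hG2⟩

lemma minus_rng_val {H : Set Λ.Obj} {hH : Λ.Hereditary H} (f : (Λ.minus H hH).Mor) :
    ((Λ.minus H hH).rng f).1 = Λ.rng f.1 := rfl

lemma minus_src_val {H : Set Λ.Obj} {hH : Λ.Hereditary H} (f : (Λ.minus H hH).Mor) :
    ((Λ.minus H hH).src f).1 = Λ.src f.1 := rfl

lemma minus_deg' {H : Set Λ.Obj} {hH : Λ.Hereditary H} (f : (Λ.minus H hH).Mor) :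
    (Λ.minus H hH).deg f = Λ.deg f.1 := rfl

lemma minus_rowFinite {H : Set Λ.Obj} (hH : Λ.Hereditary H) (hrf : Λ.RowFinite) :
    (Λ.minus H hH).RowFinite := by
  intro v n
  have : {f : (Λ.minus H hH).Mor | (Λ.minus H hH).rng f = v ∧ (Λ.minus H hH).deg f = n} =
      Subtype.val ⁻¹' {f : Λ.Mor | Λ.rng f = v.1 ∧ Λ.deg f = n} := by
    ext f
    simp only [Set.mem_setOf_eq, Set.mem_preimage]
    constructor
    · rintro ⟨h1, h2⟩; exact ⟨congrArg Subtype.val h1, h2⟩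
    · rintro ⟨h1, h2⟩; exact ⟨Subtype.ext h1, h2⟩
  rw [this]
  exact Set.Finite.preimage Subtype.val_injective.injOn (hrf v.1 n)

lemma minus_locallyConvex {H : Set Λ.Obj} (hH : Λ.Hereditary H) (hsat : Λ.Saturated H)
    (hlc : Λ.LocallyConvex) : (Λ.minus H hH).LocallyConvex := by
  intro v i j hij f g hrf' hdf hrg' hdg
  constructor
  · obtain ⟨f', hf'1, hf'2⟩ := (hlc v.1 i j hij f.1 g.1 (congrArg Subtype.val hrf') hdf
      (congrArg Subtype.val hrg') hdg).1
    obtain ⟨e, he1, he2, he3⟩ := exists_edge_notin hsat f.2 j ⟨f', hf'1, hf'2⟩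
    exact ⟨⟨e, he3⟩, Subtype.ext he1, he2⟩
  · obtain ⟨g', hg'1, hg'2⟩ := (hlc v.1 i j hij f.1 g.1 (congrArg Subtype.val hrf') hdf
      (congrArg Subtype.val hrg') hdg).2
    obtain ⟨e, he1, he2, he3⟩ := exists_edge_notin hsat g.2 i ⟨g', hg'1, hg'2⟩
    exact ⟨⟨e, he3⟩, Subtype.ext he1, he2⟩

end KGraph

namespace KGraph
variable {k : ℕ} {Λ : KGraph k} {R : Type} [CommRing R] {A : Type}
  [NonUnitalRing A] [Module R A] [SMulCommClass R A A] [IsScalarTower R A A]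

lemma KPFamily.KP4' (F : KPFamily Λ R A) (hrf : Λ.RowFinite) (v : Λ.Obj)
    (n : Fin k → ℕ) (hn : n ≠ 0) :
    F.P v = ∑ f ∈ (finite_leSet_rng hrf v n).toFinset, F.S f * F.S' f := by
  rw [F.KP4 v n hn, finsum_mem_eq_finite_toFinset_sum _ (finite_leSet_rng hrf v n)]

lemma KPFamily.S'_mul_S_mem (F : KPFamily Λ R A) (hrf : Λ.RowFinite) (g h : Λ.Mor) :
    F.S' g * F.S h ∈ Submodule.span R
      {x : A | ∃ α β : Λ.Mor, Λ.src α = Λ.src β ∧ Λ.rng α = Λ.src g ∧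
        Λ.rng β = Λ.src h ∧ x = F.S α * F.S' β} := by
  classical
  rcases Nat.eq_zero_or_pos k with hk | hk
  · subst hk
    have hg0 : Λ.deg g = 0 := funext fun i => i.elim0
    have hh0 : Λ.deg h = 0 := funext fun i => i.elim0
    have hg : g = Λ.id (Λ.rng g) := eq_id_of_deg_eq_zero hg0
    have hh : h = Λ.id (Λ.rng h) := eq_id_of_deg_eq_zero hh0
    by_cases hvw : Λ.rng g = Λ.rng h
    · apply Submodule.subset_span
      refine ⟨g, h, ?_, (src_eq_rng_of_deg_eq_zero hg0).symm ▸ rfl, ?_, ?_⟩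
      · rw [src_eq_rng_of_deg_eq_zero hg0, src_eq_rng_of_deg_eq_zero hh0, hvw]
      · rw [src_eq_rng_of_deg_eq_zero hh0]
      · rw [hg, hh, F.S'_id, F.S_id, F.S_id, F.S'_id]
    · have hz : F.S' g * F.S h = 0 := by
        rw [hg, hh, F.S'_id, F.S_id]; exact F.P_orthogonal _ _ hvw
      rw [hz]; exact Submodule.zero_mem _
  · set n₁ : Fin k → ℕ := fun i => Λ.deg h i + 1 with hn1def
    set n₂ : Fin k → ℕ := fun i => Λ.deg g i + 1 with hn2def
    have i0 : Fin k := ⟨0, hk⟩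
    have hn₁ : n₁ ≠ 0 := by
      intro hcon
      have := congrFun hcon i0
      simp only [hn1def, Pi.zero_apply] at this
      omega
    have hn₂ : n₂ ≠ 0 := by
      intro hcon
      have := congrFun hcon i0
      simp only [hn2def, Pi.zero_apply] at this
      omega
    set T1 := (finite_leSet_rng hrf (Λ.src g) n₁).toFinset with hT1
    set T2 := (finite_leSet_rng hrf (Λ.src h) n₂).toFinset with hT2
    have e1 : F.S' g = ∑ α ∈ T1, F.S α * F.S' α * F.S' g := by
      conv_lhs => rw [← F.P_S' g, F.KP4' hrf (Λ.src g) n₁ hn₁]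
      rw [Finset.sum_mul]
    have e2 : F.S h = ∑ β ∈ T2, F.S h * (F.S β * F.S' β) := by
      conv_lhs => rw [← F.S_P h, F.KP4' hrf (Λ.src h) n₂ hn₂]
      rw [Finset.mul_sum]
    have key : F.S' g * F.S h =
        ∑ α ∈ T1, ∑ β ∈ T2, (F.S α * F.S' α * F.S' g) * (F.S h * (F.S β * F.S' β)) := by
      conv_lhs => rw [e1, e2]
      rw [Finset.sum_mul_sum]
    rw [key]
    apply Submodule.sum_mem
    intro α hα
    apply Submodule.sum_mem
    intro β hβ
    rw [Set.Finite.mem_toFinset] at hα hβ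
    obtain ⟨hα1, hα2⟩ := hα
    obtain ⟨hβ1, hβ2⟩ := hβ
    have hgα : Λ.src g = Λ.rng α := hα2.symm
    have hhβ : Λ.src h = Λ.rng β := hβ2.symm
    have hNN : Λ.deg h + n₂ = Λ.deg g + n₁ := by
      funext i
      simp only [Pi.add_apply, hn1def, hn2def]
      omega
    have hc1 : Λ.comp g α hgα ∈ Λ.LeSet (Λ.deg g + n₁) := comp_mem_leSet hα1 hgα
    have hc2 : Λ.comp h β hhβ ∈ Λ.LeSet (Λ.deg g + n₁) := hNN ▸ comp_mem_leSet hβ1 hhβ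
    have hN0 : Λ.deg g + n₁ ≠ 0 := by
      intro hcon
      have := congrFun hcon i0
      simp only [Pi.add_apply, hn1def, Pi.zero_apply] at this
      omega
    have t3 := F.KP3 (Λ.deg g + n₁) hN0 _ hc1 _ hc2
    have hterm : (F.S α * F.S' α * F.S' g) * (F.S h * (F.S β * F.S' β)) =
        F.S α * (F.S' (Λ.comp g α hgα) * F.S (Λ.comp h β hhβ)) * F.S' β := by
      rw [← F.S'_comp g α hgα, ← F.S_comp h β hhβ]
      simp only [mul_assoc]
    rw [hterm, t3]
    by_cases hcc : Λ.comp g α hgα = Λ.comp h β hhβ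
    · rw [if_pos hcc, Λ.src_comp]
      rw [F.S_P α]
      apply Submodule.subset_span
      refine ⟨α, β, ?_, hα2, hβ2, rfl⟩
      have := congrArg Λ.src hcc
      rwa [Λ.src_comp, Λ.src_comp] at this
    · rw [if_neg hcc, mul_zero, zero_mul]
      exact Submodule.zero_mem _

end KGraph

namespace KGraph
variable {k : ℕ} {Λ : KGraph k} {R : Type} [CommRing R] {A : Type}
  [NonUnitalRing A] [Module R A] [SMulCommClass R A A] [IsScalarTower R A A]

lemma KPFamily.sandwich_mem (F : KPFamily Λ R A) (hrf : Λ.RowFinite)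
    {H : Set Λ.Obj} (hH : Λ.Hereditary H) {f g h l : Λ.Mor}
    (hfg : Λ.src f = Λ.src g) (hhl : Λ.src h = Λ.src l)
    (hsrc : Λ.src g ∈ H ∨ Λ.src h ∈ H) :
    (F.S f * F.S' g) * (F.S h * F.S' l) ∈ F.IH H := by
  have hL1 := F.S'_mul_S_mem hrf g h
  set L : A →ₗ[R] A :=
    (LinearMap.mulRight R (F.S' l)).comp (LinearMap.mulLeft R (F.S f)) with hLdef
  have h2 : L (F.S' g * F.S h) ∈ Submodule.map L (Submodule.span R
      {x : A | ∃ α β : Λ.Mor, Λ.src α = Λ.src β ∧ Λ.rng α = Λ.src g ∧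
        Λ.rng β = Λ.src h ∧ x = F.S α * F.S' β}) :=
    Submodule.mem_map_of_mem hL1
  rw [Submodule.map_span] at h2
  have hgoal : (F.S f * F.S' g) * (F.S h * F.S' l) = L (F.S' g * F.S h) := by
    simp only [hLdef, LinearMap.comp_apply, LinearMap.mulLeft_apply,
      LinearMap.mulRight_apply]
    simp only [mul_assoc]
  rw [hgoal]
  refine Submodule.span_le.mpr ?_ h2
  rintro _ ⟨x0, ⟨α, β, hs, hrα, hrβ, rfl⟩, rfl⟩
  have hcα : Λ.src f = Λ.rng α := by rw [hfg, ← hrα]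
  have hcβ : Λ.src l = Λ.rng β := by rw [← hhl, ← hrβ]
  have hx : L (F.S α * F.S' β) = F.S (Λ.comp f α hcα) * F.S' (Λ.comp l β hcβ) := by
    simp only [hLdef, LinearMap.comp_apply, LinearMap.mulLeft_apply,
      LinearMap.mulRight_apply]
    rw [← F.S_comp f α hcα, ← F.S'_comp l β hcβ]
    simp only [mul_assoc]
  rw [hx]
  apply Submodule.subset_span
  refine ⟨Λ.comp f α hcα, Λ.comp l β hcβ, ?_, ?_, rfl⟩
  · rw [Λ.src_comp, Λ.src_comp]; exact hs
  · rw [Λ.src_comp]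
    rcases hsrc with hg | hh
    · exact hH (Λ.rng α) (Λ.src α) (by rw [hrα]; exact hg) ⟨α, rfl, rfl⟩
    · have hβH : Λ.src β ∈ H := hH (Λ.rng β) (Λ.src β) (by rw [hrβ]; exact hh) ⟨β, rfl, rfl⟩
      rwa [hs]

lemma IsKPAlgebra.mul_mem_IH (K : IsKPAlgebra Λ R A) (hrf : Λ.RowFinite)
    {H : Set Λ.Obj} (hH : Λ.Hereditary H) :
    ∀ a ∈ K.fam.IH H, ∀ b : A, a * b ∈ K.fam.IH H := by
  have hstep : ∀ x ∈ {x : A | ∃ f g : Λ.Mor, Λ.src f = Λ.src g ∧ Λ.src f ∈ H ∧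
      x = K.fam.S f * K.fam.S' g}, ∀ c : A, x * c ∈ K.fam.IH H := by
    rintro x ⟨f, g, hfg, hfH, rfl⟩ c
    have hsub : Submodule.span R {y : A | ∃ h l : Λ.Mor, Λ.src h = Λ.src l ∧
        y = K.fam.S h * K.fam.S' l} ≤
        (K.fam.IH H).comap (LinearMap.mulLeft R (K.fam.S f * K.fam.S' g)) := by
      apply Submodule.span_le.mpr
      rintro y ⟨h, l, hhl, rfl⟩
      simp only [Set.mem_setOf_eq, SetLike.mem_coe, Submodule.mem_comap,
        LinearMap.mulLeft_apply]
      exact K.fam.sandwich_mem hrf hH hfg hhl (Or.inl (hfg ▸ hfH))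
    exact hsub (K.spanning c)
  intro a ha b
  have hsub2 : K.fam.IH H ≤ (K.fam.IH H).comap (LinearMap.mulRight R b) := by
    apply Submodule.span_le.mpr
    intro x hx
    simp only [SetLike.mem_coe, Submodule.mem_comap, LinearMap.mulRight_apply]
    exact hstep x hx b
  exact hsub2 ha

lemma IsKPAlgebra.IH_mem_mul (K : IsKPAlgebra Λ R A) (hrf : Λ.RowFinite)
    {H : Set Λ.Obj} (hH : Λ.Hereditary H) :
    ∀ a ∈ K.fam.IH H, ∀ b : A, b * a ∈ K.fam.IH H := by
  have hstep : ∀ x ∈ {x : A | ∃ f g : Λ.Mor, Λ.src f = Λ.src g ∧ Λ.src f ∈ H ∧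
      x = K.fam.S f * K.fam.S' g}, ∀ c : A, c * x ∈ K.fam.IH H := by
    rintro x ⟨f, g, hfg, hfH, rfl⟩ c
    have hsub : Submodule.span R {y : A | ∃ h l : Λ.Mor, Λ.src h = Λ.src l ∧
        y = K.fam.S h * K.fam.S' l} ≤
        (K.fam.IH H).comap (LinearMap.mulRight R (K.fam.S f * K.fam.S' g)) := by
      apply Submodule.span_le.mpr
      rintro y ⟨h, l, hhl, rfl⟩
      simp only [Set.mem_setOf_eq, SetLike.mem_coe, Submodule.mem_comap,
        LinearMap.mulRight_apply]
      exact K.fam.sandwich_mem hrf hH hhl hfg (Or.inr hfH)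
    exact hsub (K.spanning c)
  intro a ha b
  have hsub2 : K.fam.IH H ≤ (K.fam.IH H).comap (LinearMap.mulLeft R b) := by
    apply Submodule.span_le.mpr
    intro x hx
    simp only [SetLike.mem_coe, Submodule.mem_comap, LinearMap.mulLeft_apply]
    exact hstep x hx b
  exact hsub2 ha

end KGraph

namespace KGraph
variable {k : ℕ} {Λ : KGraph k} {R : Type} [CommRing R] {B : Type}
  [NonUnitalRing B] [Module R B] [SMulCommClass R B B] [IsScalarTower R B B]

lemma rng_notin_of_src_notin {H : Set Λ.Obj} (hH : Λ.Hereditary H) {f : Λ.Mor}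
    (hf : Λ.src f ∉ H) : Λ.rng f ∉ H :=
  fun hm => hf (hH _ _ hm ⟨f, rfl, rfl⟩)

lemma src_in_of_rng_in {H : Set Λ.Obj} (hH : Λ.Hereditary H) {f : Λ.Mor}
    (hf : Λ.rng f ∈ H) : Λ.src f ∈ H :=
  hH _ _ hf ⟨f, rfl, rfl⟩

open Classical in
/-- Push a Kumjian–Pask `Λ∖H`-family forward to a Kumjian–Pask `Λ`-family, sending
everything touching `H` to zero. -/
noncomputable def KPFamily.pushforward {H : Set Λ.Obj} (hH : Λ.Hereditary H)
    (hsat : Λ.Saturated H) (hrf : Λ.RowFinite)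
    (G : KPFamily (Λ.minus H hH) R B) : KPFamily Λ R B where
  P v := if h : v ∈ H then 0 else G.P ⟨v, h⟩
  S f := if h : Λ.src f ∈ H then 0 else G.S ⟨f, h⟩
  S' f := if h : Λ.src f ∈ H then 0 else G.S' ⟨f, h⟩
  S_id v := by
    by_cases h : v ∈ H
    · rw [dif_pos (by rw [Λ.src_id]; exact h), dif_pos h]
    · rw [dif_neg (by rw [Λ.src_id]; exact h), dif_neg h]
      exact G.S_id ⟨v, h⟩
  S'_id v := by
    by_cases h : v ∈ H
    · rw [dif_pos (by rw [Λ.src_id]; exact h), dif_pos h]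
    · rw [dif_neg (by rw [Λ.src_id]; exact h), dif_neg h]
      exact G.S'_id ⟨v, h⟩
  P_mul_self v := by
    by_cases h : v ∈ H
    · rw [dif_pos h, mul_zero]
    · rw [dif_neg h]; exact G.P_mul_self ⟨v, h⟩
  P_orthogonal v w hvw := by
    by_cases hv : v ∈ H
    · rw [dif_pos hv, zero_mul]
    · by_cases hw : w ∈ H
      · rw [dif_pos hw, mul_zero]
      · rw [dif_neg hv, dif_neg hw]
        exact G.P_orthogonal ⟨v, hv⟩ ⟨w, hw⟩ (fun hc => hvw (congrArg Subtype.val hc))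
  S_comp f g h := by
    by_cases hg : Λ.src g ∈ H
    · rw [dif_pos hg, mul_zero, dif_pos (by rw [Λ.src_comp]; exact hg)]
    · have hf : Λ.src f ∉ H := by rw [h]; exact rng_notin_of_src_notin hH hg
      rw [dif_neg hg, dif_neg hf, dif_neg (by rw [Λ.src_comp]; exact hg)]
      exact G.S_comp ⟨f, hf⟩ ⟨g, hg⟩ (Subtype.ext h)
  S'_comp f g h := by
    by_cases hg : Λ.src g ∈ H
    · rw [dif_pos hg, zero_mul, dif_pos (by rw [Λ.src_comp]; exact hg)]
    · have hf : Λ.src f ∉ H := by rw [h]; exact rng_notin_of_src_notin hH hg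
      rw [dif_neg hg, dif_neg hf, dif_neg (by rw [Λ.src_comp]; exact hg)]
      exact G.S'_comp ⟨f, hf⟩ ⟨g, hg⟩ (Subtype.ext h)
  P_S f := by
    by_cases h : Λ.src f ∈ H
    · rw [dif_pos h, mul_zero]
    · rw [dif_neg h, dif_neg (rng_notin_of_src_notin hH h)]
      exact G.P_S ⟨f, h⟩
  S_P f := by
    by_cases h : Λ.src f ∈ H
    · rw [dif_pos h, zero_mul]
    · rw [dif_neg h, dif_neg h]
      exact G.S_P ⟨f, h⟩
  P_S' f := by
    by_cases h : Λ.src f ∈ H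
    · rw [dif_pos h, dif_pos h, mul_zero]
    · rw [dif_neg h, dif_neg h]
      exact G.P_S' ⟨f, h⟩
  S'_P f := by
    by_cases h : Λ.src f ∈ H
    · rw [dif_pos h, zero_mul]
    · rw [dif_neg h, dif_neg (rng_notin_of_src_notin hH h)]
      exact G.S'_P ⟨f, h⟩
  KP3 n hn f hf g hg := by
    by_cases h1 : Λ.src f ∈ H
    · rw [dif_pos h1, zero_mul]
      by_cases hfg : f = g
      · rw [if_pos hfg, dif_pos h1]
      · rw [if_neg hfg]
    · by_cases h2 : Λ.src g ∈ H
      · rw [dif_pos h2, mul_zero,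
          if_neg (fun hc : f = g => h1 (by rw [hc]; exact h2))]
      · rw [dif_neg h1, dif_neg h2,
          G.KP3 n hn ⟨f, h1⟩ ((minus_leSet_iff hH hsat h1 n).mpr hf)
            ⟨g, h2⟩ ((minus_leSet_iff hH hsat h2 n).mpr hg)]
        by_cases hfg : f = g
        · rw [if_pos hfg, dif_neg h1]
          exact if_pos (Subtype.ext hfg)
        · rw [if_neg hfg]
          exact if_neg (fun hc : (⟨f, h1⟩ : (Λ.minus H hH).Mor) = ⟨g, h2⟩ =>
            hfg (congrArg Subtype.val hc))
  KP4 v n hn := by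
    rw [finsum_mem_eq_finite_toFinset_sum _ (finite_leSet_rng hrf v n)]
    by_cases hv : v ∈ H
    · rw [dif_pos hv]
      symm
      apply Finset.sum_eq_zero
      intro f hf
      rw [Set.Finite.mem_toFinset] at hf
      rw [dif_pos (src_in_of_rng_in hH (by rw [hf.2]; exact hv)), zero_mul]
    · rw [dif_neg hv, G.KP4' (minus_rowFinite hH hrf) ⟨v, hv⟩ n hn]
      rw [← Finset.sum_filter_of_ne
        (p := fun f => Λ.src f ∉ H) (by
          intro f _ hne
          by_contra hfH
          exact hne (by rw [dif_pos hfH, zero_mul]))]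
      symm
      apply Finset.sum_bij
        (i := fun (f : Λ.Mor) (hf : f ∈ (Finset.filter (fun f => Λ.src f ∉ H)
          (finite_leSet_rng hrf v n).toFinset)) =>
          (⟨f, (Finset.mem_filter.mp hf).2⟩ : (Λ.minus H hH).Mor))
      · intro f hf
        obtain ⟨hf1, hf2⟩ := Finset.mem_filter.mp hf
        rw [Set.Finite.mem_toFinset] at hf1
        exact (Set.Finite.mem_toFinset (hs := _)).mpr
          ⟨(minus_leSet_iff hH hsat hf2 n).mpr hf1.1, Subtype.ext hf1.2⟩
      · intro f hf f' hf' hee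
        exact congrArg Subtype.val hee
      · intro F hF
        replace hF := (Set.Finite.mem_toFinset (hs := _)).mp hF
        refine ⟨F.1, Finset.mem_filter.mpr ⟨?_, F.2⟩, ?_⟩
        · rw [Set.Finite.mem_toFinset]
          exact ⟨(minus_leSet_iff hH hsat F.2 n).mp hF.1, congrArg Subtype.val hF.2⟩
        · rfl
      · intro f hf
        rw [dif_neg (Finset.mem_filter.mp hf).2, dif_neg (Finset.mem_filter.mp hf).2]

end KGraph

section QuotRing
variable {R : Type} [CommRing R] {A : Type} [NonUnitalRing A] [Module R A]
  [SMulCommClass R A A] [IsScalarTower R A A] (I : Submodule R A)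
  (hr : ∀ a ∈ I, ∀ b : A, a * b ∈ I) (hl : ∀ a ∈ I, ∀ b : A, b * a ∈ I)

/-- Multiplication on the quotient of a nonunital algebra by a two-sided-ideal
submodule. -/
def qMul (x y : A ⧸ I) : A ⧸ I :=
  Quotient.liftOn₂' x y (fun a b => Submodule.Quotient.mk (a * b)) (by
    intro a₁ a₂ b₁ b₂ ha hb
    have ha' : a₁ - b₁ ∈ I := (Submodule.quotientRel_def I).mp ha
    have hb' : a₂ - b₂ ∈ I := (Submodule.quotientRel_def I).mp hb
    show (Submodule.Quotient.mk (a₁ * a₂) : A ⧸ I) = Submodule.Quotient.mk (b₁ * b₂)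
    rw [Submodule.Quotient.eq]
    have hre : a₁ * a₂ - b₁ * b₂ = a₁ * (a₂ - b₂) + (a₁ - b₁) * b₂ := by
      rw [mul_sub, sub_mul]; abel
    rw [hre]
    exact I.add_mem (hl _ hb' a₁) (hr _ ha' b₂))

lemma qMul_mk (a b : A) :
    qMul I hr hl (Submodule.Quotient.mk a) (Submodule.Quotient.mk b) =
      Submodule.Quotient.mk (a * b) := rfl

/-- The quotient of a nonunital algebra by a two-sided-ideal submodule is a
nonunital ring. -/
@[reducible]
def quotNonUnitalRing : NonUnitalRing (A ⧸ I) :=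
  { (Submodule.Quotient.addCommGroup I) with
    mul := qMul I hr hl
    left_distrib := fun x y z => by
      obtain ⟨a, rfl⟩ := Submodule.Quotient.mk_surjective I x
      obtain ⟨b, rfl⟩ := Submodule.Quotient.mk_surjective I y
      obtain ⟨c, rfl⟩ := Submodule.Quotient.mk_surjective I z
      show (Submodule.Quotient.mk (a * (b + c)) : A ⧸ I) =
        Submodule.Quotient.mk (a * b) + Submodule.Quotient.mk (a * c)
      rw [mul_add, Submodule.Quotient.mk_add]
    right_distrib := fun x y z => by
      obtain ⟨a, rfl⟩ := Submodule.Quotient.mk_surjective I x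
      obtain ⟨b, rfl⟩ := Submodule.Quotient.mk_surjective I y
      obtain ⟨c, rfl⟩ := Submodule.Quotient.mk_surjective I z
      show (Submodule.Quotient.mk ((a + b) * c) : A ⧸ I) =
        Submodule.Quotient.mk (a * c) + Submodule.Quotient.mk (b * c)
      rw [add_mul, Submodule.Quotient.mk_add]
    zero_mul := fun x => by
      obtain ⟨a, rfl⟩ := Submodule.Quotient.mk_surjective I x
      show (Submodule.Quotient.mk (0 * a) : A ⧸ I) = 0
      rw [zero_mul]; rfl
    mul_zero := fun x => by
      obtain ⟨a, rfl⟩ := Submodule.Quotient.mk_surjective I x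
      show (Submodule.Quotient.mk (a * 0) : A ⧸ I) = 0
      rw [mul_zero]; rfl
    mul_assoc := fun x y z => by
      obtain ⟨a, rfl⟩ := Submodule.Quotient.mk_surjective I x
      obtain ⟨b, rfl⟩ := Submodule.Quotient.mk_surjective I y
      obtain ⟨c, rfl⟩ := Submodule.Quotient.mk_surjective I z
      show (Submodule.Quotient.mk (a * b * c) : A ⧸ I) =
        Submodule.Quotient.mk (a * (b * c))
      rw [mul_assoc] }

end QuotRing

namespace KGraph

open Classical in
/-- The canonical Kumjian–Pask `(Λ∖H)`-family in the quotient of a Kumjian–Pask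
algebra of `Λ` by the ideal `I_H`, described abstractly through a linear
multiplicative map `π` with kernel `I_H`. -/
noncomputable def IsKPAlgebra.quotFamily {k : ℕ} {Λ : KGraph k} {R : Type} [CommRing R]
    {A : Type} [NonUnitalRing A] [Module R A] [SMulCommClass R A A] [IsScalarTower R A A]
    (K : IsKPAlgebra Λ R A) (hrf : Λ.RowFinite) {H : Set Λ.Obj}
    (hH : Λ.Hereditary H) (hsat : Λ.Saturated H)
    {Q : Type} [NonUnitalRing Q] [Module R Q] [SMulCommClass R Q Q] [IsScalarTower R Q Q]
    (π : A →ₗ[R] Q)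
    (hmul : ∀ a b : A, π a * π b = π (a * b))
    (hker : ∀ a : A, π a = 0 ↔ a ∈ K.fam.IH H) :
    KPFamily (Λ.minus H hH) R Q where
  P u := π (K.fam.P u.1)
  S F := π (K.fam.S F.1)
  S' F := π (K.fam.S' F.1)
  S_id u := congrArg π (K.fam.S_id u.1)
  S'_id u := congrArg π (K.fam.S'_id u.1)
  P_mul_self v := by
    rw [hmul]
    exact congrArg π (K.fam.P_mul_self v.1)
  P_orthogonal v w hvw := by
    rw [hmul, K.fam.P_orthogonal v.1 w.1 (fun hc => hvw (Subtype.ext hc)), map_zero]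
  S_comp f g h := by
    rw [hmul]
    exact congrArg π (K.fam.S_comp f.1 g.1 (congrArg Subtype.val h))
  S'_comp f g h := by
    rw [hmul]
    exact congrArg π (K.fam.S'_comp f.1 g.1 (congrArg Subtype.val h))
  P_S f := by
    rw [hmul]
    exact congrArg π (K.fam.P_S f.1)
  S_P f := by
    rw [hmul]
    exact congrArg π (K.fam.S_P f.1)
  P_S' f := by
    rw [hmul]
    exact congrArg π (K.fam.P_S' f.1)
  S'_P f := by
    rw [hmul]
    exact congrArg π (K.fam.S'_P f.1)
  KP3 n hn f hf g hg := by
    have hf' : f.1 ∈ Λ.LeSet n := (minus_leSet_iff hH hsat f.2 n).mp hf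
    have hg' : g.1 ∈ Λ.LeSet n := (minus_leSet_iff hH hsat g.2 n).mp hg
    rw [hmul, K.fam.KP3 n hn f.1 hf' g.1 hg']
    by_cases hfg : f = g
    · rw [if_pos (show f.1 = g.1 from congrArg Subtype.val hfg), if_pos hfg]
      rfl
    · rw [if_neg (fun hc => hfg (Subtype.ext hc)), if_neg hfg, map_zero]
  KP4 v n hn := by
    rw [finsum_mem_eq_finite_toFinset_sum _
      (finite_leSet_rng (minus_rowFinite hH hrf) v n)]
    have hA := congrArg π (K.fam.KP4' hrf v.1 n hn)
    rw [map_sum] at hA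
    rw [hA, ← Finset.sum_filter_of_ne (p := fun f => Λ.src f ∉ H) (by
      intro f hfmem hne
      by_contra hfH
      apply hne
      rw [(hker _).2]
      exact Submodule.subset_span ⟨f, f, rfl, hfH, rfl⟩)]
    apply Finset.sum_bij
      (i := fun (f : Λ.Mor) (hfmem : f ∈ (Finset.filter (fun f => Λ.src f ∉ H)
        (finite_leSet_rng hrf v.1 n).toFinset)) =>
        (⟨f, (Finset.mem_filter.mp hfmem).2⟩ : (Λ.minus H hH).Mor))
    · intro f hfmem
      obtain ⟨hf1, hf2⟩ := Finset.mem_filter.mp hfmem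
      rw [Set.Finite.mem_toFinset] at hf1
      exact (Set.Finite.mem_toFinset (hs := _)).mpr
        ⟨(minus_leSet_iff hH hsat hf2 n).mpr hf1.1, Subtype.ext hf1.2⟩
    · intro f hf f' hf' hee
      exact congrArg Subtype.val hee
    · intro F hF
      replace hF := (Set.Finite.mem_toFinset (hs := _)).mp hF
      refine ⟨F.1, Finset.mem_filter.mpr ⟨?_, F.2⟩, rfl⟩
      rw [Set.Finite.mem_toFinset]
      exact ⟨(minus_leSet_iff hH hsat F.2 n).mp hF.1, congrArg Subtype.val hF.2⟩
    · intro f hfmem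
      rw [hmul]

end KGraph

namespace KGraph
variable {k : ℕ} {Λ : KGraph k} {R : Type} [CommRing R] {B : Type}
  [NonUnitalRing B] [Module R B] [SMulCommClass R B B] [IsScalarTower R B B]
  {H : Set Λ.Obj} {hH : Λ.Hereditary H} {hsat : Λ.Saturated H} {hrf : Λ.RowFinite}
  {G : KPFamily (Λ.minus H hH) R B}

lemma KPFamily.pushforward_S_of {f : Λ.Mor} (hf : Λ.src f ∉ H) :
    (G.pushforward hH hsat hrf).S f = G.S ⟨f, hf⟩ := dif_neg hf

lemma KPFamily.pushforward_S_zero {f : Λ.Mor} (hf : Λ.src f ∈ H) :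
    (G.pushforward hH hsat hrf).S f = 0 := dif_pos hf

lemma KPFamily.pushforward_S'_of {f : Λ.Mor} (hf : Λ.src f ∉ H) :
    (G.pushforward hH hsat hrf).S' f = G.S' ⟨f, hf⟩ := dif_neg hf

lemma KPFamily.pushforward_S'_zero {f : Λ.Mor} (hf : Λ.src f ∈ H) :
    (G.pushforward hH hsat hrf).S' f = 0 := dif_pos hf

end KGraph

/-- **Lemma 4.6.** For a row-finite locally convex `k`-graph `Λ`, a unital
commutative ring `R` and a saturated hereditary `H ⊆ Λ⁰`, the graph `Λ ∖ H` is a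
row-finite locally convex `k`-graph and `KP_R(Λ ∖ H)` is canonically isomorphic to
`KP_R(Λ) / I_H` (equivalently: there is a surjective `R`-algebra homomorphism
`KP_R(Λ) → KP_R(Λ ∖ H)` with kernel `I_H`). -/
theorem kumjianPask_quotient_graph_iso
    {k : ℕ} (Λ : KGraph k) (hrf : Λ.RowFinite) (hlc : Λ.LocallyConvex)
    (R : Type) [CommRing R] (A : Type) [NonUnitalRing A] [Module R A]
    [SMulCommClass R A A] [IsScalarTower R A A]
    (B : Type) [NonUnitalRing B] [Module R B] [SMulCommClass R B B]
    [IsScalarTower R B B]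
    (H : Set Λ.Obj) (hH : Λ.Hereditary H) (hsat : Λ.Saturated H)
    (KA : KGraph.IsKPAlgebra Λ R A)
    (KB : KGraph.IsKPAlgebra (Λ.minus H hH) R B) :
    (Λ.minus H hH).RowFinite ∧ (Λ.minus H hH).LocallyConvex ∧
    ∃ φ : A →ₙₐ[R] B, Function.Surjective φ ∧
      {a : A | φ a = 0} = (KA.fam.IH H : Set A) := by
  classical
  refine ⟨KGraph.minus_rowFinite hH hrf, KGraph.minus_locallyConvex hH hsat hlc, ?_⟩
  obtain ⟨φ, hφP, hφS, hφS'⟩ := KA.universal B (KB.fam.pushforward hH hsat hrf)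
  have hr : ∀ a ∈ KA.fam.IH H, ∀ b : A, a * b ∈ KA.fam.IH H := KA.mul_mem_IH hrf hH
  have hl : ∀ a ∈ KA.fam.IH H, ∀ b : A, b * a ∈ KA.fam.IH H := KA.IH_mem_mul hrf hH
  letI : NonUnitalRing (A ⧸ KA.fam.IH H) := quotNonUnitalRing (KA.fam.IH H) hr hl
  haveI : SMulCommClass R (A ⧸ KA.fam.IH H) (A ⧸ KA.fam.IH H) := ⟨fun r x y => by
    obtain ⟨a, rfl⟩ := Submodule.Quotient.mk_surjective _ x
    obtain ⟨b, rfl⟩ := Submodule.Quotient.mk_surjective _ y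
    show r • (Submodule.Quotient.mk (a * b) : A ⧸ KA.fam.IH H) =
      Submodule.Quotient.mk (a * (r • b))
    rw [mul_smul_comm, Submodule.Quotient.mk_smul]⟩
  haveI : IsScalarTower R (A ⧸ KA.fam.IH H) (A ⧸ KA.fam.IH H) := ⟨fun r x y => by
    obtain ⟨a, rfl⟩ := Submodule.Quotient.mk_surjective _ x
    obtain ⟨b, rfl⟩ := Submodule.Quotient.mk_surjective _ y
    show (Submodule.Quotient.mk ((r • a) * b) : A ⧸ KA.fam.IH H) =
      r • Submodule.Quotient.mk (a * b)
    rw [smul_mul_assoc, Submodule.Quotient.mk_smul]⟩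
  obtain ⟨ψ, hψP, hψS, hψS'⟩ := KB.universal (A ⧸ KA.fam.IH H)
    (KA.quotFamily hrf hH hsat (KA.fam.IH H).mkQ (fun a b => rfl)
      (fun a => Submodule.Quotient.mk_eq_zero (KA.fam.IH H)))
  refine ⟨φ, ?_, ?_⟩
  · intro b
    have hle : Submodule.span R {x : B | ∃ F G₂ : (Λ.minus H hH).Mor,
        (Λ.minus H hH).src F = (Λ.minus H hH).src G₂ ∧ x = KB.fam.S F * KB.fam.S' G₂} ≤
        LinearMap.range (LinearMapClass.linearMap φ) := by
      apply Submodule.span_le.mpr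
      rintro x ⟨F, G₂, hFG, rfl⟩
      rw [SetLike.mem_coe, LinearMap.mem_range]
      refine ⟨KA.fam.S F.1 * KA.fam.S' G₂.1, ?_⟩
      show φ (KA.fam.S F.1 * KA.fam.S' G₂.1) = KB.fam.S F * KB.fam.S' G₂
      rw [map_mul, hφS, hφS', KGraph.KPFamily.pushforward_S_of F.2,
        KGraph.KPFamily.pushforward_S'_of G₂.2]
      rfl
    obtain ⟨a, ha⟩ := LinearMap.mem_range.mp (hle (KB.spanning b))
    exact ⟨a, ha⟩
  · have hle : Submodule.span R {x : A | ∃ f g : Λ.Mor, Λ.src f = Λ.src g ∧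
        x = KA.fam.S f * KA.fam.S' g} ≤
        LinearMap.ker ((LinearMapClass.linearMap ψ).comp (LinearMapClass.linearMap φ) - (KA.fam.IH H).mkQ) := by
      apply Submodule.span_le.mpr
      rintro x ⟨f, g, hfg, rfl⟩
      rw [SetLike.mem_coe, LinearMap.mem_ker, LinearMap.sub_apply, LinearMap.comp_apply,
        sub_eq_zero]
      show ψ (φ (KA.fam.S f * KA.fam.S' g)) =
        (Submodule.Quotient.mk (KA.fam.S f * KA.fam.S' g) : A ⧸ KA.fam.IH H)
      rw [map_mul, hφS f, hφS' g]
      by_cases h : Λ.src f ∈ H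
      · rw [KGraph.KPFamily.pushforward_S_zero h, zero_mul, map_zero]
        symm
        rw [Submodule.Quotient.mk_eq_zero]
        exact Submodule.subset_span ⟨f, g, hfg, h, rfl⟩
      · have hg2 : Λ.src g ∉ H := by rw [← hfg]; exact h
        rw [KGraph.KPFamily.pushforward_S_of h, KGraph.KPFamily.pushforward_S'_of hg2,
          map_mul, hψS ⟨f, h⟩, hψS' ⟨g, hg2⟩]
        rfl
    have key : ∀ a : A, ψ (φ a) = (Submodule.Quotient.mk a : A ⧸ KA.fam.IH H) := by
      intro a
      have h0 : ((LinearMapClass.linearMap ψ).comp (LinearMapClass.linearMap φ) - (KA.fam.IH H).mkQ) a = 0 :=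
        hle (KA.spanning a)
      rw [LinearMap.sub_apply, sub_eq_zero, LinearMap.comp_apply] at h0
      exact h0
    ext a
    simp only [Set.mem_setOf_eq, SetLike.mem_coe]
    constructor
    · intro h0
      have hk := key a
      rw [h0, map_zero] at hk
      exact (Submodule.Quotient.mk_eq_zero _).mp hk.symm
    · intro haI
      have hle2 : KA.fam.IH H ≤ LinearMap.ker (LinearMapClass.linearMap φ) := by
        apply Submodule.span_le.mpr
        rintro x ⟨f, g, hfg, hfH, rfl⟩
        rw [SetLike.mem_coe, LinearMap.mem_ker]
        show φ (KA.fam.S f * KA.fam.S' g) = 0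
        rw [map_mul, hφS f, KGraph.KPFamily.pushforward_S_zero hfH, zero_mul]
      exact hle2 haI
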